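/- arXiv:1708.01744 — 5 statements merged into one kernel-verified Lean document; each statement's English description precedes it below -/
import Mathlib

section
/- Let K ≥ 1, let w_1 ≤ w_2 ≤ … ≤ w_K be positive real numbers, let γ ∈ (0,1], let M ≥ 1 be an integer, and let l_1 ≥ l_2 ≥ … ≥ l_K ≥ 0 be real numbers. Then Σ_{k=1}^{K} (w_k^{γ^M} / Σ_{j=1}^{K} w_j^{γ^M}) · l_k ≥ Σ_{k=1}^{K} (w_k^{γ} / Σ_{j=1}^{K} w_j^{γ}) · l_k. -/
/-!
Write `α = γ ^ M ≤ γ`. The distribution `p(γ)` is `p(α)` reweighted by the likelihood ratio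
`w_k ^ γ / w_k ^ α = w_k ^ (γ - α)`, which increases with `k` while the losses decrease.
A weighted Chebyshev sum inequality then says that this reweighting can only lower the
expected loss.
-/

open Finset

lemma sum_sum_mul_mul_sub_mul_sub {ι R : Type*} [CommRing R] (s : Finset ι) (q f g : ι → R) :
    ∑ i ∈ s, ∑ j ∈ s, q i * q j * ((f j - f i) * (g j - g i)) =
      2 * ((∑ i ∈ s, q i) * ∑ i ∈ s, q i * f i * g i
        - (∑ i ∈ s, q i * f i) * ∑ i ∈ s, q i * g i) := by
  have expand : ∀ i j, q i * q j * ((f j - f i) * (g j - g i)) =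
      q i * (q j * f j * g j) - q i * g i * (q j * f j) - q i * f i * (q j * g j)
        + q i * f i * g i * q j := fun i j => by ring
  simp only [expand, sum_add_distrib, sum_sub_distrib, ← mul_sum, ← sum_mul]
  ring

theorem AntivaryOn.sum_mul_sum_mul_le_sum_mul_mul_sum {ι R : Type*} [CommRing R] [LinearOrder R]
    [IsStrictOrderedRing R] {s : Finset ι} {q f g : ι → R} (hfg : AntivaryOn f g s)
    (hq : ∀ i ∈ s, 0 ≤ q i) :
    (∑ i ∈ s, q i) * ∑ i ∈ s, q i * f i * g i ≤
      (∑ i ∈ s, q i * f i) * ∑ i ∈ s, q i * g i := by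
  have pairs_nonpos : ∑ i ∈ s, ∑ j ∈ s, q i * q j * ((f j - f i) * (g j - g i)) ≤ 0 :=
    sum_nonpos fun i hi => sum_nonpos fun j hj =>
      mul_nonpos_of_nonneg_of_nonpos (mul_nonneg (hq i hi) (hq j hj))
        (hfg.sub_mul_sub_nonpos hi hj)
  rw [sum_sum_mul_mul_sub_mul_sub] at pairs_nonpos
  linarith

theorem AntivaryOn.sum_div_sum_mul_le_sum_div_sum_mul {ι 𝕜 : Type*} [Field 𝕜] [LinearOrder 𝕜]
    [IsStrictOrderedRing 𝕜] {s : Finset ι} {p q g : ι → 𝕜}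
    (hpqg : AntivaryOn (fun i => p i / q i) g s) (hp : 0 < ∑ i ∈ s, p i)
    (hq : ∀ i ∈ s, 0 < q i) :
    ∑ i ∈ s, (p i / ∑ j ∈ s, p j) * g i ≤ ∑ i ∈ s, (q i / ∑ j ∈ s, q j) * g i := by
  have hq_sum : 0 < ∑ i ∈ s, q i := sum_pos hq (nonempty_of_sum_ne_zero hp.ne')
  have cancel : ∀ i ∈ s, q i * (p i / q i) * g i = p i * g i := fun i hi => by
    rw [mul_div_cancel₀ _ (hq i hi).ne']
  have cheb := hpqg.sum_mul_sum_mul_le_sum_mul_mul_sum fun i hi => (hq i hi).le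
  rw [sum_congr rfl cancel, sum_congr rfl fun i hi => mul_div_cancel₀ _ (hq i hi).ne'] at cheb
  simp only [div_mul_eq_mul_div, ← sum_div, div_le_div_iff₀ hp hq_sum]
  linarith

theorem flatter_distribution_larger_expected_loss_general
    (K : ℕ) (hK : 1 ≤ K) (w : ℕ → ℝ)
    (hw_pos : ∀ i ∈ Finset.Icc 1 K, 0 < w i)
    (hw_mono : ∀ i ∈ Finset.Icc 1 K, ∀ j ∈ Finset.Icc 1 K, i ≤ j → w i ≤ w j)
    (γ : ℝ) (hγ : γ ∈ Set.Ioc (0 : ℝ) 1) (M : ℕ) (hM : 1 ≤ M)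
    (l : ℕ → ℝ)
    (hl_anti : ∀ i ∈ Finset.Icc 1 K, ∀ j ∈ Finset.Icc 1 K, i ≤ j → l j ≤ l i) :
    ∑ k ∈ Finset.Icc 1 K,
        (w k ^ (γ ^ M) / ∑ j ∈ Finset.Icc 1 K, w j ^ (γ ^ M)) * l k ≥
      ∑ k ∈ Finset.Icc 1 K,
        (w k ^ γ / ∑ j ∈ Finset.Icc 1 K, w j ^ γ) * l k := by
  obtain ⟨hγ_pos, hγ_le_one⟩ := hγ
  have hpow_le : γ ^ M ≤ γ := pow_le_of_le_one hγ_pos.le hγ_le_one (by omega)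
  have ratio_mono : MonotoneOn (fun k => w k ^ γ / w k ^ γ ^ M) (Icc 1 K) :=
    fun i hi j hj hij => by
      simp only [← Real.rpow_sub (hw_pos i hi), ← Real.rpow_sub (hw_pos j hj)]
      exact Real.rpow_le_rpow (hw_pos i hi).le (hw_mono i hi j hj hij) (sub_nonneg.2 hpow_le)
  have loss_anti : AntitoneOn l (Icc 1 K) := fun i hi j hj hij => hl_anti i hi j hj hij
  exact (ratio_mono.antivaryOn loss_anti).sum_div_sum_mul_le_sum_div_sum_mul
    (sum_pos (fun k hk => Real.rpow_pos_of_pos (hw_pos k hk) γ) ⟨1, by simp [hK]⟩)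
    (fun k hk => Real.rpow_pos_of_pos (hw_pos k hk) _)

/-- For positive ascending weights `w 1 ≤ … ≤ w K`, `γ ∈ (0,1]`, an integer
`M ≥ 1` and nonincreasing nonnegative losses `l 1 ≥ … ≥ l K ≥ 0`, the flatter
distribution obtained with exponent `γ^M` assigns at least as large an expected loss as
the one with exponent `γ`. -/
theorem flatter_distribution_larger_expected_loss
    (K : ℕ) (hK : 1 ≤ K) (w : ℕ → ℝ)
    (hw_pos : ∀ i ∈ Finset.Icc 1 K, 0 < w i)
    (hw_mono : ∀ i ∈ Finset.Icc 1 K, ∀ j ∈ Finset.Icc 1 K, i ≤ j → w i ≤ w j)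
    (γ : ℝ) (hγ : γ ∈ Set.Ioc (0 : ℝ) 1) (M : ℕ) (hM : 1 ≤ M)
    (l : ℕ → ℝ)
    (hl_nonneg : ∀ i ∈ Finset.Icc 1 K, 0 ≤ l i)
    (hl_anti : ∀ i ∈ Finset.Icc 1 K, ∀ j ∈ Finset.Icc 1 K, i ≤ j → l j ≤ l i) :
    ∑ k ∈ Finset.Icc 1 K,
        (w k ^ (γ ^ M) / ∑ j ∈ Finset.Icc 1 K, w j ^ (γ ^ M)) * l k ≥
      ∑ k ∈ Finset.Icc 1 K,
        (w k ^ γ / ∑ j ∈ Finset.Icc 1 K, w j ^ γ) * l k :=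
  flatter_distribution_larger_expected_loss_general K hK w hw_pos hw_mono γ hγ M hM l hl_anti
end

section
/- Consider Discounted HEDGE with K ≥ 1 experts, β ∈ (0,1], γ ∈ (0,1], initial weights w_k[1] = W > 0 for all k, losses l^{(k)}[n] ∈ [0,1], weight recurrence w_k[n+1] = (w_k[n])^{γ} · β^{l^{(k)}[n]}, probabilities p^{(k)}[n] = (w_k[n])^{γ} / Σ_{j=1}^{K} (w_j[n])^{γ}, and predictor loss L_N(γ) = Σ_{n=1}^{N} γ^{N−n} Σ_{k=1}^{K} p^{(k)}[n] l^{(k)}[n]. Assume the anti-monotonicity condition: for every time n and all experts j, k, if w_j[n] ≤ w_k[n] then l^{(j)}[n] ≥ l^{(k)}[n]. Then for every N ≥ 1, Σ_{k=1}^{K} w_k[N+1] ≤ K · W^{γ^N} · exp(−(1−β) · L_N(γ)). -/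
/-!
Put `c n = γ ^ (N - n)` and `Φ n = ∑ k, w k (n + 1) ^ c n`, so that `Φ 0 = K * W ^ γ ^ N` and
`Φ N` is the total weight after `N` rounds. Bernoulli's inequality `β ^ x ≤ 1 - (1 - β) * x`
bounds `Φ n` by `∑ k, w k n ^ (γ * c n) * (1 - (1 - β) * c n * l k n)`. Since `γ * c n ≤ γ`,
the distribution `∝ w ^ (γ * c n)` is flatter than the HEDGE distribution `∝ w ^ γ`; under
anti-monotonicity it moves mass towards the worse experts, so by a weighted Chebyshev inequality
its average loss is at least the HEDGE loss `ℓ n`. Hence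
`Φ n ≤ Φ (n - 1) * (1 - (1 - β) * c n * ℓ n) ≤ Φ (n - 1) * exp (-(1 - β) * c n * ℓ n)`,
and the bound follows by telescoping.
-/

open Finset Real

theorem AntivaryOn.weighted_card_mul_sum_le_sum_mul_sum {ι : Type*} {s : Finset ι}
    {u f g : ι → ℝ} (hfg : AntivaryOn f g s) (hu : ∀ i ∈ s, 0 ≤ u i) :
    (∑ i ∈ s, u i) * ∑ i ∈ s, u i * (f i * g i) ≤
      (∑ i ∈ s, u i * f i) * ∑ i ∈ s, u i * g i := by
  have hdiag : ∑ i ∈ s, ∑ j ∈ s, u i * u j * (f i * g i + f j * g j) =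
      2 * ((∑ i ∈ s, u i) * ∑ i ∈ s, u i * (f i * g i)) := by
    simp only [mul_add, sum_add_distrib, sum_mul_sum]
    rw [sum_comm (s := s) (t := s) (f := fun i j => u i * u j * (f i * g i))]
    simp only [two_mul]
    congr 1 <;> exact sum_congr rfl fun _ _ => sum_congr rfl fun _ _ => by ring
  have hcross : ∑ i ∈ s, ∑ j ∈ s, u i * u j * (f i * g j + f j * g i) =
      2 * ((∑ i ∈ s, u i * f i) * ∑ i ∈ s, u i * g i) := by
    simp only [mul_add, sum_add_distrib, sum_mul_sum]
    rw [sum_comm (s := s) (t := s) (f := fun i j => u i * u j * (f j * g i))]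
    simp only [two_mul]
    congr 1 <;> exact sum_congr rfl fun _ _ => sum_congr rfl fun _ _ => by ring
  have hpair : ∑ i ∈ s, ∑ j ∈ s, u i * u j * (f i * g i + f j * g j) ≤
      ∑ i ∈ s, ∑ j ∈ s, u i * u j * (f i * g j + f j * g i) :=
    sum_le_sum fun i hi => sum_le_sum fun j hj => mul_le_mul_of_nonneg_left
      (antivaryOn_iff_mul_rearrangement.1 hfg hi hj) (mul_nonneg (hu i hi) (hu j hj))
  linarith

theorem AntivaryOn.sum_rpow_mul_sum_rpow_mul_le {ι : Type*} {s : Finset ι} {v l : ι → ℝ}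
    {a b : ℝ} (hlv : AntivaryOn l v s) (hv : ∀ i ∈ s, 0 < v i) (hab : a ≤ b) :
    (∑ i ∈ s, v i ^ a) * ∑ i ∈ s, v i ^ b * l i ≤
      (∑ i ∈ s, v i ^ b) * ∑ i ∈ s, v i ^ a * l i := by
  have hmono : MonotoneOn (fun x : ℝ => x ^ (b - a)) (v '' s) := by
    rintro _ ⟨i, hi, rfl⟩ _ _ hxy
    exact rpow_le_rpow (hv i hi).le hxy (sub_nonneg.2 hab)
  have hsplit : ∀ i ∈ s, v i ^ a * v i ^ (b - a) = v i ^ b := fun i hi => by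
    rw [← rpow_add (hv i hi), add_sub_cancel]
  have key := (hlv.comp_monotoneOn_right hmono).weighted_card_mul_sum_le_sum_mul_sum
    (u := fun i => v i ^ a) fun i hi => (rpow_pos_of_pos (hv i hi) a).le
  simp only [Function.comp_apply, sum_congr rfl hsplit] at key
  have hmerge : ∑ i ∈ s, v i ^ a * (l i * v i ^ (b - a)) = ∑ i ∈ s, v i ^ b * l i :=
    sum_congr rfl fun i hi => by rw [← hsplit i hi]; ring
  rw [hmerge] at key
  linarith

theorem Real.rpow_le_one_sub_one_sub_mul {β x : ℝ} (hβ : 0 ≤ β) (hx₀ : 0 ≤ x) (hx₁ : x ≤ 1) :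
    β ^ x ≤ 1 - (1 - β) * x := by
  have := rpow_one_add_le_one_add_mul_self (s := β - 1) (by linarith) hx₀ hx₁
  rw [add_sub_cancel] at this
  linarith

theorem sum_rpow_hedge_update_le {ι : Type*} {s : Finset ι} {v l : ι → ℝ} {β γ c : ℝ}
    (hv : ∀ i ∈ s, 0 < v i) (hl : ∀ i ∈ s, l i ∈ Set.Icc (0 : ℝ) 1) (hlv : AntivaryOn l v s)
    (hβ₀ : 0 ≤ β) (hβ₁ : β ≤ 1) (hγ : 0 ≤ γ) (hc₀ : 0 ≤ c) (hc₁ : c ≤ 1) :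
    ∑ i ∈ s, (v i ^ γ * β ^ l i) ^ c ≤
      (∑ i ∈ s, v i ^ (γ * c)) *
        exp (-(1 - β) * (c * ∑ i ∈ s, (v i ^ γ / ∑ j ∈ s, v j ^ γ) * l i)) := by
  set T := ∑ i ∈ s, v i ^ (γ * c)
  set P := ∑ i ∈ s, (v i ^ γ / ∑ j ∈ s, v j ^ γ) * l i
  have hbernoulli : ∑ i ∈ s, (v i ^ γ * β ^ l i) ^ c ≤
      T - (1 - β) * c * ∑ i ∈ s, v i ^ (γ * c) * l i := by
    rw [mul_sum, ← sum_sub_distrib]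
    refine sum_le_sum fun i hi => ?_
    obtain ⟨hl₀, hl₁⟩ := hl i hi
    have hvi := (hv i hi).le
    rw [mul_rpow (rpow_nonneg hvi γ) (rpow_nonneg hβ₀ _), ← rpow_mul hvi, ← rpow_mul hβ₀]
    have := rpow_le_one_sub_one_sub_mul hβ₀ (mul_nonneg hl₀ hc₀) (mul_le_one₀ hl₁ hc₀ hc₁)
    nlinarith [rpow_nonneg hvi (γ * c)]
  have hmajor : T * P ≤ ∑ i ∈ s, v i ^ (γ * c) * l i := by
    rcases s.eq_empty_or_nonempty with rfl | hne
    · simp [T]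
    have hS : 0 < ∑ j ∈ s, v j ^ γ := sum_pos (fun j hj => rpow_pos_of_pos (hv j hj) γ) hne
    have hP : P = (∑ i ∈ s, v i ^ γ * l i) / ∑ j ∈ s, v j ^ γ := by
      simp only [P, sum_div, div_mul_eq_mul_div]
    rw [hP, mul_div_assoc', div_le_iff₀ hS, mul_comm _ (∑ j ∈ s, v j ^ γ)]
    exact hlv.sum_rpow_mul_sum_rpow_mul_le hv (mul_le_of_le_one_right hγ hc₁)
  have hT : 0 ≤ T := sum_nonneg fun i hi => rpow_nonneg (hv i hi).le _
  calc ∑ i ∈ s, (v i ^ γ * β ^ l i) ^ c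
      ≤ T - (1 - β) * c * ∑ i ∈ s, v i ^ (γ * c) * l i := hbernoulli
    _ ≤ T - (1 - β) * c * (T * P) := by gcongr
    _ = T * (-(1 - β) * (c * P) + 1) := by ring
    _ ≤ T * exp (-(1 - β) * (c * P)) := by gcongr; exact add_one_le_exp _

theorem le_mul_exp_sum_Icc_of_le_mul_exp {a x : ℕ → ℝ} {N : ℕ}
    (h : ∀ n < N, a (n + 1) ≤ a n * exp (x (n + 1))) :
    a N ≤ a 0 * exp (∑ n ∈ Icc 1 N, x n) := by
  induction N with
  | zero => simp
  | succ N ih =>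
    calc a (N + 1) ≤ a N * exp (x (N + 1)) := h N N.lt_succ_self
      _ ≤ a 0 * exp (∑ n ∈ Icc 1 N, x n) * exp (x (N + 1)) :=
        mul_le_mul_of_nonneg_right (ih fun n hn => h n (by omega)) (exp_pos _).le
      _ = a 0 * exp (∑ n ∈ Icc 1 (N + 1), x n) := by
        rw [sum_Icc_succ_top (by omega), exp_add, mul_assoc]

theorem discounted_hedge_total_weight_upper_bound_general
    (K : ℕ) (β γ W : ℝ)
    (hβ : β ∈ Set.Ioc (0 : ℝ) 1) (hγ : γ ∈ Set.Ioc (0 : ℝ) 1) (hW : 0 < W)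
    (w l : ℕ → ℕ → ℝ)
    (hl : ∀ k ∈ Finset.Icc 1 K, ∀ n, 1 ≤ n → l k n ∈ Set.Icc (0 : ℝ) 1)
    (hw1 : ∀ k ∈ Finset.Icc 1 K, w k 1 = W)
    (hrec : ∀ k ∈ Finset.Icc 1 K, ∀ n, 1 ≤ n →
      w k (n + 1) = (w k n) ^ γ * β ^ (l k n))
    (hanti : ∀ n, 1 ≤ n → ∀ j ∈ Finset.Icc 1 K, ∀ k ∈ Finset.Icc 1 K,
      w j n ≤ w k n → l k n ≤ l j n)
    (N : ℕ) :
    ∑ k ∈ Finset.Icc 1 K, w k (N + 1) ≤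
      (K : ℝ) * W ^ (γ ^ N) *
        Real.exp (-(1 - β) *
          ∑ n ∈ Finset.Icc 1 N, γ ^ (N - n) *
            ∑ k ∈ Finset.Icc 1 K,
              ((w k n) ^ γ / ∑ j ∈ Finset.Icc 1 K, (w j n) ^ γ) * l k n) := by
  obtain ⟨hβ₀, hβ₁⟩ := hβ
  obtain ⟨hγ₀, hγ₁⟩ := hγ
  have hpos : ∀ n, 1 ≤ n → ∀ k ∈ Icc 1 K, 0 < w k n := by
    intro n hn
    induction n, hn using Nat.le_induction with
    | base => intro k hk; rw [hw1 k hk]; exact hW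
    | succ n hn ih =>
      intro k hk
      rw [hrec k hk n hn]
      exact mul_pos (rpow_pos_of_pos (ih k hk) γ) (rpow_pos_of_pos hβ₀ _)
  have hinit : ∑ k ∈ Icc 1 K, w k 1 ^ γ ^ N = K * W ^ γ ^ N := by
    rw [sum_congr rfl fun k hk => by rw [hw1 k hk]]
    simp
  have htele := le_mul_exp_sum_Icc_of_le_mul_exp (N := N)
    (a := fun n => ∑ k ∈ Icc 1 K, w k (n + 1) ^ γ ^ (N - n))
    (x := fun n => -(1 - β) *
      (γ ^ (N - n) * ∑ k ∈ Icc 1 K, (w k n ^ γ / ∑ j ∈ Icc 1 K, w j n ^ γ) * l k n))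
    fun n hn => by
      have hexp : γ ^ (N - n) = γ * γ ^ (N - (n + 1)) := by
        rw [← pow_succ']
        congr 1
        omega
      rw [hexp, sum_congr rfl fun k hk => by rw [hrec k hk (n + 1) (by omega)]]
      exact sum_rpow_hedge_update_le (fun k hk => hpos _ (by omega) k hk)
        (fun k hk => hl k hk _ (by omega)) (fun i hi j hj h => hanti _ (by omega) i hi j hj h.le)
        hβ₀.le hβ₁ hγ₀.le (pow_nonneg hγ₀.le _) (pow_le_one₀ hγ₀.le hγ₁)
  simpa only [Nat.sub_self, pow_zero, rpow_one, zero_add, Nat.sub_zero, hinit, mul_sum]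
    using htele

/-- telescoped total-weight upper bound for Discounted HEDGE under the
anti-monotonicity condition (smaller-weight experts incur larger instantaneous losses):
`∑_k w k (N+1) ≤ K * W^(γ^N) * exp(-(1-β) * L_N(γ))` where
`L_N(γ) = ∑_{n=1}^N γ^(N-n) ∑_k p k n * l k n`. -/
theorem discounted_hedge_total_weight_upper_bound
    (K : ℕ) (hK : 1 ≤ K) (β γ W : ℝ)
    (hβ : β ∈ Set.Ioc (0 : ℝ) 1) (hγ : γ ∈ Set.Ioc (0 : ℝ) 1) (hW : 0 < W)
    (w l : ℕ → ℕ → ℝ)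
    (hl : ∀ k ∈ Finset.Icc 1 K, ∀ n, 1 ≤ n → l k n ∈ Set.Icc (0 : ℝ) 1)
    (hw1 : ∀ k ∈ Finset.Icc 1 K, w k 1 = W)
    (hrec : ∀ k ∈ Finset.Icc 1 K, ∀ n, 1 ≤ n →
      w k (n + 1) = (w k n) ^ γ * β ^ (l k n))
    (hanti : ∀ n, 1 ≤ n → ∀ j ∈ Finset.Icc 1 K, ∀ k ∈ Finset.Icc 1 K,
      w j n ≤ w k n → l k n ≤ l j n)
    (N : ℕ) (hN : 1 ≤ N) :
    ∑ k ∈ Finset.Icc 1 K, w k (N + 1) ≤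
      (K : ℝ) * W ^ (γ ^ N) *
        Real.exp (-(1 - β) *
          ∑ n ∈ Finset.Icc 1 N, γ ^ (N - n) *
            ∑ k ∈ Finset.Icc 1 K,
              ((w k n) ^ γ / ∑ j ∈ Finset.Icc 1 K, (w j n) ^ γ) * l k n) :=
  discounted_hedge_total_weight_upper_bound_general K β γ W hβ hγ hW w l hl hw1 hrec hanti N
end

section
/- Let L, L̃, R, R̃ be real numbers with 0 ≤ L ≤ L̃, 0 ≤ R ≤ R̃, L̃ > 0 and R̃ > 0, and set β = 1 / (1 + √(2 R̃ / L̃)) (so β ∈ (0,1)). Then (−L · ln β + R) / (1 − β) ≤ L + √(2 · L̃ · R̃) + R. -/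
/-! With `β = 1 / (1 + s)` the bound `log (1 + s) ≤ sinh (log (1 + s))` turns the generic bound into
`L + L s / 2 + R / s + R`. Replacing `L, R` by their upper bounds, the remaining `L̃ s / 2 + R̃ / s`
is minimised at `s = √(2 R̃ / L̃)`, where both terms equal `√(2 L̃ R̃) / 2`. -/

open Real

theorem Real.log_le_sub_inv_div_two {x : ℝ} (hx : 1 ≤ x) : log x ≤ (x - x⁻¹) / 2 := by
  rw [← sinh_log (by linarith)]
  exact self_le_sinh_iff.mpr (log_nonneg hx)

theorem hedge_bound_le {s : ℝ} (hs : 0 < s) {L : ℝ} (hL : 0 ≤ L) (R : ℝ) :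
    (-L * log (1 / (1 + s)) + R) / (1 - 1 / (1 + s)) ≤ L + L * s / 2 + R / s + R := by
  have hlog : log (1 + s) ≤ ((1 + s) - (1 + s)⁻¹) / 2 := log_le_sub_inv_div_two (by linarith)
  have hβ : 1 - (1 + s)⁻¹ = s / (1 + s) := by field_simp; ring
  rw [one_div, log_inv, hβ, div_le_iff₀ (by positivity)]
  calc -L * -log (1 + s) + R ≤ L * (((1 + s) - (1 + s)⁻¹) / 2) + R := by
        linarith [mul_le_mul_of_nonneg_left hlog hL]
    _ = (L + L * s / 2 + R / s + R) * (s / (1 + s)) := by field_simp; ring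

theorem div_two_mul_sqrt_add_div_sqrt {a b : ℝ} (ha : 0 < a) (hb : 0 < b) :
    a / 2 * √(2 * b / a) + b / √(2 * b / a) = √(2 * a * b) := by
  have hs : 0 < √(2 * b / a) := sqrt_pos.mpr (by positivity)
  have hsq : √(2 * b / a) ^ 2 = 2 * b / a := sq_sqrt (by positivity)
  have hab : √(2 * a * b) = a * √(2 * b / a) := by
    rw [sqrt_eq_iff_mul_self_eq_of_pos (by positivity), ← sq, mul_pow, hsq]
    field_simp
  rw [hab]
  field_simp
  rw [hsq]
  field_simp
  ring

theorem freund_schapire_tuning_general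
    (L Ltil R Rtil : ℝ)
    (hL0 : 0 ≤ L) (hL : L ≤ Ltil) (hR : R ≤ Rtil)
    (hLtil : 0 < Ltil) (hRtil : 0 < Rtil)
    (β : ℝ) (hβ : β = 1 / (1 + Real.sqrt (2 * Rtil / Ltil))) :
    (-L * Real.log β + R) / (1 - β) ≤ L + Real.sqrt (2 * Ltil * Rtil) + R := by
  subst hβ
  have hs : 0 < √(2 * Rtil / Ltil) := sqrt_pos.mpr (by positivity)
  calc _ ≤ L + L * √(2 * Rtil / Ltil) / 2 + R / √(2 * Rtil / Ltil) + R := hedge_bound_le hs hL0 R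
    _ ≤ L + (Ltil / 2 * √(2 * Rtil / Ltil) + Rtil / √(2 * Rtil / Ltil)) + R := by
      have : L * √(2 * Rtil / Ltil) ≤ Ltil * √(2 * Rtil / Ltil) := by gcongr
      have : R / √(2 * Rtil / Ltil) ≤ Rtil / √(2 * Rtil / Ltil) := by gcongr
      linarith
    _ = L + √(2 * Ltil * Rtil) + R := by rw [div_two_mul_sqrt_add_div_sqrt hLtil hRtil]

/-- Freund–Schapire parameter-tuning inequality: for `0 ≤ L ≤ L̃`,
`0 ≤ R ≤ R̃`, `L̃ > 0`, `R̃ > 0` and `β = 1/(1 + √(2R̃/L̃))`,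
`(-L ln β + R)/(1-β) ≤ L + √(2 L̃ R̃) + R`. -/
theorem freund_schapire_tuning
    (L Ltil R Rtil : ℝ)
    (hL0 : 0 ≤ L) (hL : L ≤ Ltil) (hR0 : 0 ≤ R) (hR : R ≤ Rtil)
    (hLtil : 0 < Ltil) (hRtil : 0 < Rtil)
    (β : ℝ) (hβ : β = 1 / (1 + Real.sqrt (2 * Rtil / Ltil))) :
    (-L * Real.log β + R) / (1 - β) ≤ L + Real.sqrt (2 * Ltil * Rtil) + R :=
  freund_schapire_tuning_general L Ltil R Rtil hL0 hL hR hLtil hRtil β hβ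
end

section
/- Consider Discounted HEDGE with K ≥ 2 experts, discounting factor γ ∈ (0,1), time horizon N ≥ 1, penalty parameter β = 1 / (1 + √(2 · ln K · (1−γ)/(1−γ^N))), initial weights w_k[1] = W > 0 for all k, losses l^{(k)}[n] ∈ [0,1], weight recurrence w_k[n+1] = (w_k[n])^{γ} · β^{l^{(k)}[n]}, probabilities p^{(k)}[n] = (w_k[n])^{γ} / Σ_{j=1}^{K} (w_j[n])^{γ}, expert losses L_{k,N}(γ) = Σ_{n=1}^{N} γ^{N−n} l^{(k)}[n], and predictor loss L_N(γ) = Σ_{n=1}^{N} γ^{N−n} Σ_{k=1}^{K} p^{(k)}[n] l^{(k)}[n]. Assume the anti-monotonicity condition: for every n and all j, k, if w_j[n] ≤ w_k[n] then l^{(j)}[n] ≥ l^{(k)}[n]. Let k* be an expert minimizing L_{k,N}(γ). Then L_N(γ) ≤ L_{k*,N}(γ) + √(2 · ln K · (1−γ^N)/(1−γ)) + ln K. -/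
/-!
The potential `Φ n = ∑ k, w k n` obeys a discounted recursion. By Jensen's inequality for the
concave map `x ↦ x ^ γ`, `∑ k, w k n ^ γ ≤ K ^ (1 - γ) * Φ n ^ γ`, and `β ^ x ≤ 1 - (1 - β) x` on
`[0, 1]`; hence `log Φ (n + 1) - log K ≤ γ (log Φ n - log K) - (1 - β) ℓ n`, where `ℓ n` is the
predictor's loss at time `n`. Unrolling this and comparing `Φ (N + 1)` with the single weight
`w k (N + 1) = W ^ γ ^ N * β ^ L_{k,N}(γ)` gives
`(1 - β) L_N(γ) ≤ log K + L_{k,N}(γ) log (1 / β)` for every expert `k`. Since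
`L_{k,N}(γ) ≤ (1 - γ ^ N) / (1 - γ)`, the Freund–Schapire choice of `β` turns this into the
stated bound.
-/

open Finset Real

noncomputable def discountedSum (γ : ℝ) (f : ℕ → ℝ) (m : ℕ) : ℝ :=
  ∑ n ∈ Icc 1 m, γ ^ (m - n) * f n

section DiscountedSum

variable {γ : ℝ} {f g : ℕ → ℝ} {m : ℕ}

@[simp]
lemma discountedSum_zero : discountedSum γ f 0 = 0 := by
  simp [discountedSum]

lemma discountedSum_succ : discountedSum γ f (m + 1) = γ * discountedSum γ f m + f (m + 1) := by
  rw [discountedSum, sum_Icc_succ_top (by omega), Nat.sub_self, pow_zero, one_mul, discountedSum,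
    mul_sum]
  congr 1
  refine sum_congr rfl fun n hn => ?_
  rw [Nat.sub_add_comm (mem_Icc.mp hn).2, pow_succ]
  ring

lemma discountedSum_mono (hγ : 0 ≤ γ) (h : ∀ n ∈ Icc 1 m, f n ≤ g n) :
    discountedSum γ f m ≤ discountedSum γ g m :=
  sum_le_sum fun n hn => mul_le_mul_of_nonneg_left (h n hn) (pow_nonneg hγ _)

lemma discountedSum_nonneg (hγ : 0 ≤ γ) (h : ∀ n ∈ Icc 1 m, 0 ≤ f n) :
    0 ≤ discountedSum γ f m :=
  sum_nonneg fun n hn => mul_nonneg (pow_nonneg hγ _) (h n hn)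

lemma discountedSum_one (hγ : γ ≠ 1) :
    discountedSum γ (fun _ => 1) m = (1 - γ ^ m) / (1 - γ) := by
  rw [eq_div_iff (sub_ne_zero.mpr hγ.symm)]
  induction m with
  | zero => simp
  | succ m ih => rw [discountedSum_succ, pow_succ]; linear_combination γ * ih

lemma le_of_discounted_step {u d : ℕ → ℝ} {c : ℝ} (hγ : 0 ≤ γ)
    (h : ∀ n, 1 ≤ n → u (n + 1) ≤ γ * u n - c * d n) (m : ℕ) :
    u (m + 1) ≤ γ ^ m * u 1 - c * discountedSum γ d m := by
  induction m with
  | zero => simp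
  | succ m ih =>
    rw [discountedSum_succ, pow_succ]
    nlinarith [h (m + 1) (by omega), mul_le_mul_of_nonneg_left ih hγ]

end DiscountedSum

lemma one_add_mul_log_one_add_le {a : ℝ} (ha : 0 ≤ a) :
    (1 + a) * log (1 + a) ≤ a + a ^ 2 / 2 := by
  let f : ℝ → ℝ := fun x => x + x ^ 2 / 2 - (1 + x) * log (1 + x)
  have hderiv : ∀ x ∈ Set.Ici (0 : ℝ), HasDerivWithinAt f (x - log (1 + x)) (Set.Ici 0) x := by
    intro x hx
    have h1 : HasDerivAt (fun x : ℝ => 1 + x) 1 x := (hasDerivAt_id x).const_add 1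
    have hx1 : 1 + x ≠ 0 := by linarith [Set.mem_Ici.mp hx]
    have := ((hasDerivAt_id x).add ((hasDerivAt_pow 2 x).div_const 2)).sub (h1.mul (h1.log hx1))
    refine (this.congr_deriv ?_).hasDerivWithinAt
    field_simp
    ring
  have hmono : MonotoneOn f (Set.Ici 0) :=
    monotoneOn_of_hasDerivWithinAt_nonneg (convex_Ici 0) (HasDerivWithinAt.continuousOn hderiv)
      (fun x hx => (hderiv x (interior_subset hx)).mono interior_subset)
      (fun x hx => by
        have hx0 : 0 ≤ x := interior_subset (s := Set.Ici (0 : ℝ)) hx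
        linarith [log_le_sub_one_of_pos (x := 1 + x) (by linarith)])
  have := hmono Set.self_mem_Ici ha ha
  simp only [f, add_zero, zero_pow two_ne_zero, zero_div, log_one, mul_zero, sub_zero] at this
  linarith

lemma rpow_le_one_sub_mul {β t : ℝ} (hβ : 0 ≤ β) (ht : t ∈ Set.Icc 0 1) :
    β ^ t ≤ 1 - (1 - β) * t := by
  have := rpow_one_add_le_one_add_mul_self (s := β - 1) (by linarith) ht.1 ht.2
  rw [add_sub_cancel] at this
  linarith

section Finset

variable {ι : Type*} {s : Finset ι}

lemma sum_rpow_le_card_rpow_mul_rpow_sum {x : ι → ℝ} {γ : ℝ} (hx : ∀ i ∈ s, 0 ≤ x i)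
    (hγ : γ ∈ Set.Icc 0 1) :
    ∑ i ∈ s, x i ^ γ ≤ (s.card : ℝ) ^ (1 - γ) * (∑ i ∈ s, x i) ^ γ := by
  rcases s.eq_empty_or_nonempty with rfl | hs
  · simp only [sum_empty, card_empty, Nat.cast_zero]
    positivity
  have hK : (0 : ℝ) < s.card := by exact_mod_cast hs.card_pos
  have hjensen := (concaveOn_rpow hγ.1 hγ.2).le_map_sum (t := s) (w := fun _ => (s.card : ℝ)⁻¹)
    (p := x) (fun _ _ => by positivity) (by simp [hK.ne']) hx
  simp only [smul_eq_mul, ← mul_sum] at hjensen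
  rw [mul_rpow (by positivity) (sum_nonneg hx), inv_rpow hK.le] at hjensen
  calc ∑ i ∈ s, x i ^ γ = (s.card : ℝ) * ((s.card : ℝ)⁻¹ * ∑ i ∈ s, x i ^ γ) := by field_simp
    _ ≤ (s.card : ℝ) * (((s.card : ℝ) ^ γ)⁻¹ * (∑ i ∈ s, x i) ^ γ) := by gcongr
    _ = (s.card : ℝ) ^ (1 - γ) * (∑ i ∈ s, x i) ^ γ := by rw [rpow_sub hK, rpow_one]; ring

lemma sum_mul_rpow_le_sum_mul_exp {v l : ι → ℝ} {β : ℝ} (hβ : 0 ≤ β) (hv : ∀ i ∈ s, 0 ≤ v i)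
    (hv₀ : 0 < ∑ i ∈ s, v i) (hl : ∀ i ∈ s, l i ∈ Set.Icc 0 1) :
    ∑ i ∈ s, v i * β ^ l i ≤
      (∑ i ∈ s, v i) * exp (-((1 - β) * ∑ i ∈ s, v i / (∑ j ∈ s, v j) * l i)) := by
  have hmean : (∑ i ∈ s, v i) * ∑ i ∈ s, v i / (∑ j ∈ s, v j) * l i = ∑ i ∈ s, v i * l i := by
    rw [mul_sum]
    refine sum_congr rfl fun i _ => ?_
    field_simp
  calc ∑ i ∈ s, v i * β ^ l i ≤ ∑ i ∈ s, v i * (1 - (1 - β) * l i) :=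
        sum_le_sum fun i hi =>
          mul_le_mul_of_nonneg_left (rpow_le_one_sub_mul hβ (hl i hi)) (hv i hi)
    _ = (∑ i ∈ s, v i) * (1 - (1 - β) * ∑ i ∈ s, v i / (∑ j ∈ s, v j) * l i) := by
        rw [mul_sub, mul_one, mul_left_comm, hmean, mul_sum, ← sum_sub_distrib]
        exact sum_congr rfl fun i _ => by ring
    _ ≤ _ := by
        gcongr
        linarith [add_one_le_exp (-((1 - β) * ∑ i ∈ s, v i / (∑ j ∈ s, v j) * l i))]

lemma log_sum_rpow_mul_rpow_le {x l : ι → ℝ} {γ β : ℝ} (hs : s.Nonempty)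
    (hx : ∀ i ∈ s, 0 < x i) (hl : ∀ i ∈ s, l i ∈ Set.Icc 0 1) (hγ : γ ∈ Set.Icc 0 1) (hβ : 0 < β) :
    log (∑ i ∈ s, x i ^ γ * β ^ l i) ≤
      (1 - γ) * log s.card + γ * log (∑ i ∈ s, x i) -
        (1 - β) * ∑ i ∈ s, x i ^ γ / (∑ j ∈ s, x j ^ γ) * l i := by
  have hK : (0 : ℝ) < s.card := by exact_mod_cast hs.card_pos
  have hX : 0 < ∑ i ∈ s, x i := sum_pos hx hs
  have hP : 0 < ∑ i ∈ s, x i ^ γ := sum_pos (fun i hi => rpow_pos_of_pos (hx i hi) γ) hs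
  have hbound := (sum_mul_rpow_le_sum_mul_exp hβ.le (fun i hi => (rpow_pos_of_pos (hx i hi) γ).le)
    hP hl).trans (mul_le_mul_of_nonneg_right
      (sum_rpow_le_card_rpow_mul_rpow_sum (fun i hi => (hx i hi).le) hγ) (exp_nonneg _))
  have hpos : 0 < ∑ i ∈ s, x i ^ γ * β ^ l i :=
    sum_pos (fun i hi => mul_pos (rpow_pos_of_pos (hx i hi) γ) (rpow_pos_of_pos hβ _)) hs
  refine (log_le_log hpos hbound).trans_eq ?_
  rw [log_mul (by positivity) (exp_pos _).ne', log_mul (by positivity) (by positivity), log_exp,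
    log_rpow hK, log_rpow hX]
  ring

end Finset

namespace DiscountedHedge

variable {ι : Type*} {s : Finset ι} {γ β W : ℝ} {w l : ι → ℕ → ℝ}

structure IsRun (s : Finset ι) (γ β W : ℝ) (w l : ι → ℕ → ℝ) : Prop where
  init : ∀ k ∈ s, w k 1 = W
  step : ∀ k ∈ s, ∀ n, 1 ≤ n → w k (n + 1) = w k n ^ γ * β ^ l k n

noncomputable def predictionLoss (s : Finset ι) (γ : ℝ) (w l : ι → ℕ → ℝ) (n : ℕ) : ℝ :=
  ∑ k ∈ s, w k n ^ γ / (∑ j ∈ s, w j n ^ γ) * l k n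

namespace IsRun

lemma weight_pos (h : IsRun s γ β W w l) (hW : 0 < W) (hβ : 0 < β) {n : ℕ} (hn : 1 ≤ n)
    {k : ι} (hk : k ∈ s) : 0 < w k n := by
  induction n, hn using Nat.le_induction with
  | base => rwa [h.init k hk]
  | succ n hn ih =>
    rw [h.step k hk n hn]
    exact mul_pos (rpow_pos_of_pos ih γ) (rpow_pos_of_pos hβ _)

lemma log_weight_ge (h : IsRun s γ β W w l) (hW : 0 < W) (hβ : 0 < β)
    (hγ : 0 ≤ γ) {k : ι} (hk : k ∈ s) (m : ℕ) :
    γ ^ m * log W + log β * discountedSum γ (l k) m ≤ log (w k (m + 1)) := by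
  have hstep : ∀ n, 1 ≤ n → -log (w k (n + 1)) ≤ γ * -log (w k n) - log β * l k n := by
    intro n hn
    rw [h.step k hk n hn, log_mul (rpow_pos_of_pos (h.weight_pos hW hβ hn hk) γ).ne'
      (rpow_pos_of_pos hβ _).ne', log_rpow (h.weight_pos hW hβ hn hk), log_rpow hβ]
    linarith
  have := le_of_discounted_step (u := fun n => -log (w k n)) hγ hstep m
  rw [h.init k hk] at this
  linarith

lemma log_sum_weight_le (h : IsRun s γ β W w l) (hW : 0 < W) (hβ : 0 < β)
    (hs : s.Nonempty) (hγ : γ ∈ Set.Icc 0 1)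
    (hl : ∀ k ∈ s, ∀ n, 1 ≤ n → l k n ∈ Set.Icc 0 1) (m : ℕ) :
    log (∑ k ∈ s, w k (m + 1)) - log s.card ≤
      γ ^ m * log W - (1 - β) * discountedSum γ (predictionLoss s γ w l) m := by
  have hstep : ∀ n, 1 ≤ n → log (∑ k ∈ s, w k (n + 1)) - log s.card ≤
      γ * (log (∑ k ∈ s, w k n) - log s.card) - (1 - β) * predictionLoss s γ w l n := by
    intro n hn
    rw [sum_congr rfl fun k hk => h.step k hk n hn]
    have := log_sum_rpow_mul_rpow_le hs (fun k hk => h.weight_pos hW hβ hn hk)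
      (fun k hk => hl k hk n hn) hγ hβ
    rw [predictionLoss]
    linarith
  have hK : (0 : ℝ) < s.card := by exact_mod_cast hs.card_pos
  have := le_of_discounted_step (u := fun n => log (∑ k ∈ s, w k n) - log s.card)
    hγ.1 hstep m
  rwa [sum_congr rfl h.init, sum_const, nsmul_eq_mul, log_mul hK.ne' hW.ne', add_sub_cancel_left]
    at this

lemma one_sub_mul_discountedSum_predictionLoss_le (h : IsRun s γ β W w l) (hW : 0 < W)
    (hβ : 0 < β) (hs : s.Nonempty) (hγ : γ ∈ Set.Icc 0 1)
    (hl : ∀ k ∈ s, ∀ n, 1 ≤ n → l k n ∈ Set.Icc 0 1) {k : ι} (hk : k ∈ s) (m : ℕ) :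
    (1 - β) * discountedSum γ (predictionLoss s γ w l) m ≤
      log s.card + discountedSum γ (l k) m * log (1 / β) := by
  have hexpert := h.log_weight_ge hW hβ hγ.1 hk m
  have hpotential := h.log_sum_weight_le hW hβ hs hγ hl m
  have hle : log (w k (m + 1)) ≤ log (∑ j ∈ s, w j (m + 1)) :=
    log_le_log (h.weight_pos hW hβ (by omega) hk)
      (single_le_sum (fun j hj => (h.weight_pos hW hβ (by omega) hj).le) hk)
  rw [one_div, log_inv]
  linarith

end IsRun

end DiscountedHedge

lemma le_add_sqrt_add_of_one_sub_mul_le {X L L' R β : ℝ} (hR : 0 < R) (hL' : 0 < L')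
    (hL : L ∈ Set.Icc 0 L') (hβ : β = 1 / (1 + √(2 * R / L')))
    (h : (1 - β) * X ≤ R + L * log (1 / β)) :
    X ≤ L + √(2 * R * L') + R := by
  set a := √(2 * R / L') with ha
  have ha0 : 0 < a := sqrt_pos.mpr (by positivity)
  have haL : a ^ 2 * L' = 2 * R := by rw [ha, sq_sqrt (by positivity)]; field_simp
  have hsqrt : √(2 * R * L') = a * L' := by
    rw [← haL, show a ^ 2 * L' * L' = (a * L') ^ 2 by ring, sqrt_sq (by positivity)]
  have h1β : 1 - β = a / (1 + a) := by rw [hβ]; field_simp; ring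
  rw [h1β, hβ, one_div_one_div, div_mul_eq_mul_div, div_le_iff₀ (by positivity)] at h
  have hlog := mul_le_mul_of_nonneg_left (one_add_mul_log_one_add_le ha0.le) hL.1
  have hL2 := mul_le_mul_of_nonneg_left hL.2 (sq_nonneg a)
  rw [hsqrt]
  refine le_of_mul_le_mul_left ?_ ha0
  nlinarith

theorem discounted_hedge_regret_bound_general
    (K : ℕ) (hK : 2 ≤ K) (γ W : ℝ)
    (hγ : γ ∈ Set.Ioo (0 : ℝ) 1) (hW : 0 < W)
    (N : ℕ) (hN : 1 ≤ N)
    (β : ℝ)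
    (hβ : β = 1 / (1 + Real.sqrt (2 * Real.log K * ((1 - γ) / (1 - γ ^ N)))))
    (w l : ℕ → ℕ → ℝ)
    (hl : ∀ k ∈ Finset.Icc 1 K, ∀ n, 1 ≤ n → l k n ∈ Set.Icc (0 : ℝ) 1)
    (hw1 : ∀ k ∈ Finset.Icc 1 K, w k 1 = W)
    (hrec : ∀ k ∈ Finset.Icc 1 K, ∀ n, 1 ≤ n →
      w k (n + 1) = (w k n) ^ γ * β ^ (l k n))
    (kstar : ℕ) (hkstar : kstar ∈ Finset.Icc 1 K) :
    ∑ n ∈ Finset.Icc 1 N, γ ^ (N - n) *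
        ∑ k ∈ Finset.Icc 1 K,
          ((w k n) ^ γ / ∑ j ∈ Finset.Icc 1 K, (w j n) ^ γ) * l k n ≤
      (∑ n ∈ Finset.Icc 1 N, γ ^ (N - n) * l kstar n) +
        Real.sqrt (2 * Real.log K * ((1 - γ ^ N) / (1 - γ))) + Real.log K := by
  have hR : 0 < log K := log_pos (by exact_mod_cast hK)
  have hL' : 0 < (1 - γ ^ N) / (1 - γ) :=
    div_pos (sub_pos.mpr (pow_lt_one₀ hγ.1.le hγ.2 (by omega))) (sub_pos.mpr hγ.2)
  have hβ0 : 0 < β := by rw [hβ]; positivity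
  have hbound := DiscountedHedge.IsRun.one_sub_mul_discountedSum_predictionLoss_le ⟨hw1, hrec⟩
    hW hβ0 (nonempty_Icc.mpr (by omega)) (Set.Ioo_subset_Icc_self hγ) hl hkstar N
  have hLstar : discountedSum γ (l kstar) N ∈ Set.Icc 0 ((1 - γ ^ N) / (1 - γ)) := by
    refine ⟨discountedSum_nonneg hγ.1.le fun n hn => (hl kstar hkstar n (mem_Icc.mp hn).1).1, ?_⟩
    rw [← discountedSum_one hγ.2.ne]
    exact discountedSum_mono hγ.1.le fun n hn => (hl kstar hkstar n (mem_Icc.mp hn).1).2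
  rw [Nat.card_Icc, Nat.add_sub_cancel] at hbound
  have hβ' : β = 1 / (1 + √(2 * log K / ((1 - γ ^ N) / (1 - γ)))) := by
    rw [hβ, div_div_eq_mul_div, mul_div_assoc]
  exact le_add_sqrt_add_of_one_sub_mul_le hR hL' hLstar hβ' hbound

/-- main regret theorem for Discounted HEDGE with discounting factor
`γ ∈ (0,1)` and the optimally tuned `β = 1/(1 + √(2 ln K (1-γ)/(1-γ^N)))`: under the
anti-monotonicity condition, the predictor loss satisfies
`L_N(γ) ≤ L_{k*,N}(γ) + √(2 ln K (1-γ^N)/(1-γ)) + ln K`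
where `k*` minimizes the discounted expert loss. -/
theorem discounted_hedge_regret_bound
    (K : ℕ) (hK : 2 ≤ K) (γ W : ℝ)
    (hγ : γ ∈ Set.Ioo (0 : ℝ) 1) (hW : 0 < W)
    (N : ℕ) (hN : 1 ≤ N)
    (β : ℝ)
    (hβ : β = 1 / (1 + Real.sqrt (2 * Real.log K * ((1 - γ) / (1 - γ ^ N)))))
    (w l : ℕ → ℕ → ℝ)
    (hl : ∀ k ∈ Finset.Icc 1 K, ∀ n, 1 ≤ n → l k n ∈ Set.Icc (0 : ℝ) 1)
    (hw1 : ∀ k ∈ Finset.Icc 1 K, w k 1 = W)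
    (hrec : ∀ k ∈ Finset.Icc 1 K, ∀ n, 1 ≤ n →
      w k (n + 1) = (w k n) ^ γ * β ^ (l k n))
    (hanti : ∀ n, 1 ≤ n → ∀ j ∈ Finset.Icc 1 K, ∀ k ∈ Finset.Icc 1 K,
      w j n ≤ w k n → l k n ≤ l j n)
    (kstar : ℕ) (hkstar : kstar ∈ Finset.Icc 1 K)
    (hmin : ∀ k ∈ Finset.Icc 1 K,
      ∑ n ∈ Finset.Icc 1 N, γ ^ (N - n) * l kstar n ≤
        ∑ n ∈ Finset.Icc 1 N, γ ^ (N - n) * l k n) :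
    ∑ n ∈ Finset.Icc 1 N, γ ^ (N - n) *
        ∑ k ∈ Finset.Icc 1 K,
          ((w k n) ^ γ / ∑ j ∈ Finset.Icc 1 K, (w j n) ^ γ) * l k n ≤
      (∑ n ∈ Finset.Icc 1 N, γ ^ (N - n) * l kstar n) +
        Real.sqrt (2 * Real.log K * ((1 - γ ^ N) / (1 - γ))) + Real.log K :=
  discounted_hedge_regret_bound_general K hK γ W hγ hW N hN β hβ w l hl hw1 hrec kstar hkstar
end

section
/- For all real numbers χ and n with 1 ≤ χ ≤ n, the inequality (χ/n)·√(n/χ + 1) + 1/(2n) ≤ 2·√(χ/n) holds. -/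
/-- for all reals `1 ≤ χ ≤ n`,
`(χ/n)·√(n/χ + 1) + 1/(2n) ≤ 2·√(χ/n)`. -/
theorem fs_predictability_rate_estimate
    (χ n : ℝ) (hχ : 1 ≤ χ) (hn : χ ≤ n) :
    (χ / n) * Real.sqrt (n / χ + 1) + 1 / (2 * n) ≤ 2 * Real.sqrt (χ / n) := by
  have hχ0 : 0 < χ := lt_of_lt_of_le one_pos hχ
  have hn0 : 0 < n := lt_of_lt_of_le hχ0 hn
  set a := Real.sqrt (χ / n) with ha
  set b := Real.sqrt (n / χ + 1) with hb
  have ha2 : a ^ 2 = χ / n := Real.sq_sqrt (by positivity)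
  have hb2 : b ^ 2 = n / χ + 1 := Real.sq_sqrt (by positivity)
  have ha0 : 0 < a := Real.sqrt_pos.mpr (by positivity)
  have hb0 : 0 ≤ b := Real.sqrt_nonneg _
  have ha1 : a ≤ 1 := by
    rw [ha, show (1:ℝ) = Real.sqrt 1 by simp]
    exact Real.sqrt_le_sqrt (by rw [div_le_one hn0]; exact hn)
  have key : (a * b) ^ 2 = 1 + a ^ 2 := by
    rw [mul_pow, ha2, hb2]
    field_simp
  have hab : a * b ≤ 3 / 2 := by
    nlinarith [mul_nonneg ha0.le hb0]
  have han : 1 / n ≤ a := by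
    have h1 : 1 / n ≤ a ^ 2 := by
      rw [ha2]
      exact div_le_div_of_nonneg_right hχ hn0.le
    nlinarith
  have hgoal1 : χ / n * b = a * (a * b) := by rw [← ha2]; ring
  rw [hgoal1]
  have h1 : a * (a * b) ≤ a * (3 / 2) := mul_le_mul_of_nonneg_left hab ha0.le
  have h2 : 1 / (2 * n) ≤ a / 2 := by
    have : 1 / (2 * n) = (1 / n) / 2 := by ring
    linarith
  linarith
end
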